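/- arXiv:2601.03523 — 3 statements merged into one kernel-verified Lean document; each statement's English description precedes it below -/
import Mathlib

section
/- Under the same weight setting (E[P_x] = E[N_x] = 1, Var(P_x) = Var(N_x) = 3, Cov(P_x, N_x) = −1, pairs independent across variables), for any two distinct assignments a ≠ b on the variable set V, Cov(W_a, W_b) = −1, where W_a := Π_{x: a(x)=true} P_x · Π_{x: a(x)=false} N_x and similarly for W_b. -/
/-! Independence of the pairs factorizes both `E[W_a]` and `E[W_a W_b]` over the variables.
Every factor of `E[W_a]` is `1`, while at a variable `x` with `a x ≠ b x` the factor of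
`E[W_a W_b]` is `E[P_x N_x] = Cov(P_x, N_x) + 1 = 0`; hence `Cov(W_a, W_b) = 0 - 1 · 1`. -/

open MeasureTheory ProbabilityTheory

/-- Covariance: `Cov(U,V) = E[UV] - E[U]E[V]`; `Var(U) = Cov(U,U)`. -/
noncomputable def cov {Ω : Type*} [MeasurableSpace Ω] (μ : Measure Ω) (U V : Ω → ℝ) : ℝ :=
  (∫ ω, U ω * V ω ∂μ) - (∫ ω, U ω ∂μ) * (∫ ω, V ω ∂μ)

lemma integral_mul_eq_cov_add {Ω : Type*} [MeasurableSpace Ω] (μ : Measure Ω) (U V : Ω → ℝ) :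
    ∫ ω, U ω * V ω ∂μ = cov μ U V + (∫ ω, U ω ∂μ) * (∫ ω, V ω ∂μ) := by
  rw [cov, sub_add_cancel]

lemma measurable_ite_fst_snd {α : Type*} [MeasurableSpace α] (c : Prop) [Decidable c] :
    Measurable fun q : α × α => if c then q.1 else q.2 := by
  split_ifs <;> fun_prop

lemma integral_prod_comp_of_iIndepFun_pairs {Ω V : Type*} [MeasurableSpace Ω] [Fintype V]
    {μ : Measure Ω} {P N : V → Ω → ℝ} (hindep : iIndepFun (fun x ω => (P x ω, N x ω)) μ)
    (hP : ∀ x, Measurable (P x)) (hN : ∀ x, Measurable (N x)) {f : V → ℝ × ℝ → ℝ}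
    (hf : ∀ x, Measurable (f x)) :
    ∫ ω, ∏ x, f x (P x ω, N x ω) ∂μ = ∏ x, ∫ ω, f x (P x ω, N x ω) ∂μ :=
  hindep.integral_fun_prod_comp (fun x => ((hP x).prodMk (hN x)).aemeasurable)
    (fun x => (hf x).aestronglyMeasurable)

theorem cov_weights_of_distinct_assignments_general {Ω V : Type*} [MeasurableSpace Ω] [Fintype V]
    (μ : Measure Ω) (P N : V → Ω → ℝ)
    (hPmeas : ∀ x, Measurable (P x)) (hNmeas : ∀ x, Measurable (N x))
    (hPexp : ∀ x, (∫ ω, P x ω ∂μ) = 1) (hNexp : ∀ x, (∫ ω, N x ω ∂μ) = 1)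
    (hPNcov : ∀ x, cov μ (P x) (N x) = -1)
    (hindep : iIndepFun (fun x ω => (P x ω, N x ω)) μ)
    (a b : V → Bool) (hab : a ≠ b) :
    cov μ (fun ω => ∏ x, (if a x then P x ω else N x ω))
          (fun ω => ∏ x, (if b x then P x ω else N x ω)) = -1 := by
  have hweight (c : V → Bool) : ∫ ω, ∏ x, (if c x then P x ω else N x ω) ∂μ = 1 := by
    rw [integral_prod_comp_of_iIndepFun_pairs hindep hPmeas hNmeas
      (fun x => measurable_ite_fst_snd (c x = true))]
    exact Finset.prod_eq_one fun x _ => by cases c x <;> simp [hPexp, hNexp]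
  have hPN (x : V) : ∫ ω, P x ω * N x ω ∂μ = 0 := by
    rw [integral_mul_eq_cov_add, hPNcov, hPexp, hNexp]
    norm_num
  obtain ⟨x₀, hx₀⟩ := Function.ne_iff.mp hab
  have hmixed : ∫ ω, (∏ x, (if a x then P x ω else N x ω)) *
      ∏ x, (if b x then P x ω else N x ω) ∂μ = 0 := by
    simp_rw [← Finset.prod_mul_distrib]
    rw [integral_prod_comp_of_iIndepFun_pairs hindep hPmeas hNmeas
      (f := fun x q => (if a x then q.1 else q.2) * (if b x then q.1 else q.2))
      (fun x => (measurable_ite_fst_snd _).mul (measurable_ite_fst_snd _))]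
    refine Finset.prod_eq_zero (Finset.mem_univ x₀) ?_
    cases ha : a x₀ <;> cases hb : b x₀ <;> simp_all [mul_comm]
  rw [cov, hmixed, hweight a, hweight b]
  norm_num

theorem cov_weights_of_distinct_assignments {Ω V : Type*} [MeasurableSpace Ω] [Fintype V] [DecidableEq V]
    (μ : Measure Ω) [IsProbabilityMeasure μ] (P N : V → Ω → ℝ)
    (hPmeas : ∀ x, Measurable (P x)) (hNmeas : ∀ x, Measurable (N x))
    (hPbdd : ∀ x, ∃ C, ∀ ω, |P x ω| ≤ C) (hNbdd : ∀ x, ∃ C, ∀ ω, |N x ω| ≤ C)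
    (hPexp : ∀ x, (∫ ω, P x ω ∂μ) = 1) (hNexp : ∀ x, (∫ ω, N x ω ∂μ) = 1)
    (hPvar : ∀ x, cov μ (P x) (P x) = 3) (hNvar : ∀ x, cov μ (N x) (N x) = 3)
    (hPNcov : ∀ x, cov μ (P x) (N x) = -1)
    (hindep : iIndepFun (fun x ω => (P x ω, N x ω)) μ)
    (a b : V → Bool) (hab : a ≠ b) :
    cov μ (fun ω => ∏ x, (if a x then P x ω else N x ω))
          (fun ω => ∏ x, (if b x then P x ω else N x ω)) = -1 :=
  cov_weights_of_distinct_assignments_general μ P N hPmeas hNmeas hPexp hNexp hPNcov hindep a b hab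
end

section
/- Let f, g be Boolean functions on a finite variable set V of size n, with weight random variables satisfying E[P_x] = E[N_x] = 1, Var(P_x) = Var(N_x) = 3, Cov(P_x,N_x) = −1, and pairs independent across distinct variables. Then Cov(W_f, W_g) = (4^n − 1)·|A_{f∧g}| − |{(a,b) ∈ A_f × A_g : a ≠ b}|, where W_f := Σ_{a ∈ A_f} W_a and A_h denotes the model set of h. -/
open MeasureTheory ProbabilityTheory

/-! Writing `W_a = ∏ₓ w(a x)` with `w(true) = Pₓ`, `w(false) = Nₓ`, independence across variables
factors `E[W_a] = ∏ₓ E[w(a x)] = 1` and `E[W_a W_b] = ∏ₓ E[w(a x) w(b x)]`. The moment hypotheses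
say `E[Pₓ²] = E[Nₓ²] = 4` and `E[Pₓ Nₓ] = 0`, so the latter is `4ⁿ` if `a = b` and `0` otherwise.
Hence `Cov(W_a, W_b) = 4ⁿ [a = b] - 1`, and summing over `A_f × A_g` by bilinearity leaves a count
of diagonal and off-diagonal pairs. -/

/-- The weight of a literal of polarity `b` when `w = (Pₓ, Nₓ)`. -/
def litWeight (b : Bool) (w : ℝ × ℝ) : ℝ := if b then w.1 else w.2

lemma measurable_litWeight (b : Bool) : Measurable (litWeight b) := by
  cases b
  · exact measurable_snd
  · exact measurable_fst

/-- The paper's `W_a`. -/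
def modelWeight {Ω ι : Type*} [Fintype ι] (X : ι → Ω → ℝ × ℝ) (a : ι → Bool) (ω : Ω) : ℝ :=
  ∏ i, litWeight (a i) (X i ω)

lemma Fintype.prod_ite_apply_eq {ι β R : Type*} [Fintype ι] [DecidableEq β] [CommMonoidWithZero R]
    (a b : ι → β) (c : R) :
    ∏ i, (if a i = b i then c else 0) = if a = b then c ^ Fintype.card ι else 0 := by
  by_cases hab : a = b
  · simp [hab]
  · obtain ⟨i, hi⟩ := Function.ne_iff.mp hab
    rw [if_neg hab]
    exact Finset.prod_eq_zero (Finset.mem_univ i) (if_neg hi)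

lemma Finset.sum_sum_ite_eq_sub_one {α R : Type*} [DecidableEq α] [CommRing R]
    (A B : Finset α) (c : R) :
    ∑ a ∈ A, ∑ b ∈ B, ((if a = b then c else 0) - 1) =
      (c - 1) * (A ∩ B).card - {p ∈ A ×ˢ B | p.1 ≠ p.2}.card := by
  have hdiag : ((A ∩ B).card : R) = ∑ a ∈ A, ∑ b ∈ B, if a = b then 1 else 0 := by
    simp_rw [Finset.sum_ite_eq, Finset.sum_boole, Finset.filter_mem_eq_inter]
  have hoff : ({p ∈ A ×ˢ B | p.1 ≠ p.2}.card : R) = ∑ a ∈ A, ∑ b ∈ B, if a ≠ b then 1 else 0 := by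
    rw [Finset.card_filter, Finset.sum_product]
    push_cast
    rfl
  rw [hdiag, hoff, Finset.mul_sum, ← Finset.sum_sub_distrib]
  refine Finset.sum_congr rfl fun a _ => ?_
  rw [Finset.mul_sum, ← Finset.sum_sub_distrib]
  refine Finset.sum_congr rfl fun b _ => ?_
  split_ifs <;> simp_all

section Covariance

variable {Ω : Type*} [MeasurableSpace Ω] {μ : Measure Ω}

lemma cov_sum_sum {α β : Type*} (A : Finset α) (B : Finset β) (U : α → Ω → ℝ) (V : β → Ω → ℝ)
    (hU : ∀ a ∈ A, Integrable (U a) μ) (hV : ∀ b ∈ B, Integrable (V b) μ)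
    (hUV : ∀ a ∈ A, ∀ b ∈ B, Integrable (fun ω => U a ω * V b ω) μ) :
    cov μ (fun ω => ∑ a ∈ A, U a ω) (fun ω => ∑ b ∈ B, V b ω) =
      ∑ a ∈ A, ∑ b ∈ B, cov μ (U a) (V b) := by
  have hprod : ∫ ω, (∑ a ∈ A, U a ω) * ∑ b ∈ B, V b ω ∂μ =
      ∑ a ∈ A, ∑ b ∈ B, ∫ ω, U a ω * V b ω ∂μ := by
    simp_rw [Finset.sum_mul_sum]
    rw [integral_finsetSum _ fun a ha => integrable_finsetSum _ (hUV a ha)]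
    exact Finset.sum_congr rfl fun a ha => integral_finsetSum _ (hUV a ha)
  rw [cov, hprod, integral_finsetSum _ hU, integral_finsetSum _ hV, Finset.sum_mul_sum]
  simp only [cov, Finset.sum_sub_distrib]

variable {P N : Ω → ℝ}

lemma integral_litWeight (hP : ∫ ω, P ω ∂μ = 1) (hN : ∫ ω, N ω ∂μ = 1) (s : Bool) :
    ∫ ω, litWeight s (P ω, N ω) ∂μ = 1 := by
  cases s <;> assumption

lemma integral_litWeight_mul_litWeight (hP : ∫ ω, P ω ∂μ = 1) (hN : ∫ ω, N ω ∂μ = 1)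
    (hPP : cov μ P P = 3) (hNN : cov μ N N = 3) (hPN : cov μ P N = -1) (s t : Bool) :
    ∫ ω, litWeight s (P ω, N ω) * litWeight t (P ω, N ω) ∂μ = if s = t then 4 else 0 := by
  rw [cov, hP] at hPP
  rw [cov, hN] at hNN
  rw [cov, hP, hN] at hPN
  have hNP : ∫ ω, N ω * P ω ∂μ = 0 := by simp_rw [mul_comm (N _)]; linarith
  cases s <;> cases t <;> simp only [litWeight] <;> norm_num <;> linarith

variable {ι : Type*} [Fintype ι] {X : ι → Ω → ℝ × ℝ}

lemma memLp_top_modelWeight (hX : ∀ i s, MemLp (fun ω => litWeight s (X i ω)) ⊤ μ)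
    (a : ι → Bool) : MemLp (modelWeight X a) ⊤ μ := by
  have h := MemLp.prod' (s := Finset.univ) (p := fun _ => ⊤) fun i _ => hX i (a i)
  rwa [Finset.sum_const, ENNReal.inv_top, smul_zero, ENNReal.inv_zero] at h

lemma cov_modelWeight (hindep : iIndepFun X μ) (hXm : ∀ i, Measurable (X i))
    (h₁ : ∀ i s, ∫ ω, litWeight s (X i ω) ∂μ = 1)
    (h₂ : ∀ i s t, ∫ ω, litWeight s (X i ω) * litWeight t (X i ω) ∂μ = if s = t then 4 else 0)
    (a b : ι → Bool) :
    cov μ (modelWeight X a) (modelWeight X b) = (if a = b then 4 ^ Fintype.card ι else 0) - 1 := by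
  have hfactor {f : ι → ℝ × ℝ → ℝ} (hf : ∀ i, Measurable (f i)) :
      ∫ ω, ∏ i, f i (X i ω) ∂μ = ∏ i, ∫ ω, f i (X i ω) ∂μ :=
    hindep.integral_fun_prod_comp (fun i => (hXm i).aemeasurable)
      fun i => (hf i).aestronglyMeasurable
  have hmean (c : ι → Bool) : ∫ ω, modelWeight X c ω ∂μ = 1 := by
    simp [modelWeight, hfactor fun i => measurable_litWeight (c i), h₁]
  have hmul : ∫ ω, modelWeight X a ω * modelWeight X b ω ∂μ =
      ∫ ω, ∏ i, litWeight (a i) (X i ω) * litWeight (b i) (X i ω) ∂μ := by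
    simp only [modelWeight, Finset.prod_mul_distrib]
  rw [cov, hmean, hmean, hmul,
    hfactor (f := fun i w => litWeight (a i) w * litWeight (b i) w)
      fun i => (measurable_litWeight (a i)).mul (measurable_litWeight (b i))]
  simp only [h₂, Fintype.prod_ite_apply_eq, mul_one]

end Covariance

theorem cov_wmc_eq_general {Ω V : Type*} [MeasurableSpace Ω] [Fintype V]
    (μ : Measure Ω) [IsProbabilityMeasure μ] (P N : V → Ω → ℝ)
    (hPmeas : ∀ x, Measurable (P x)) (hNmeas : ∀ x, Measurable (N x))
    (hPbdd : ∀ x, ∃ C, ∀ ω, |P x ω| ≤ C) (hNbdd : ∀ x, ∃ C, ∀ ω, |N x ω| ≤ C)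
    (hPexp : ∀ x, (∫ ω, P x ω ∂μ) = 1) (hNexp : ∀ x, (∫ ω, N x ω ∂μ) = 1)
    (hPvar : ∀ x, cov μ (P x) (P x) = 3) (hNvar : ∀ x, cov μ (N x) (N x) = 3)
    (hPNcov : ∀ x, cov μ (P x) (N x) = -1)
    (hindep : iIndepFun (fun x ω => (P x ω, N x ω)) μ)
    (Af Ag : Finset (V → Bool)) :
    cov μ (fun ω => ∑ a ∈ Af, ∏ x, (if a x then P x ω else N x ω))
          (fun ω => ∑ b ∈ Ag, ∏ x, (if b x then P x ω else N x ω)) =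
      (4 ^ (Fintype.card V) - 1) * ((Af ∩ Ag).card : ℝ) -
        (((Af ×ˢ Ag).filter (fun p => p.1 ≠ p.2)).card : ℝ) := by
  set X : V → Ω → ℝ × ℝ := fun x ω => (P x ω, N x ω)
  have memLp_top {f : Ω → ℝ} (hf : Measurable f) (hb : ∃ C, ∀ ω, |f ω| ≤ C) : MemLp f ⊤ μ :=
    let ⟨C, hC⟩ := hb
    memLp_top_of_bound hf.aestronglyMeasurable C (ae_of_all _ hC)
  have hlit (x : V) (s : Bool) : MemLp (fun ω => litWeight s (X x ω)) ⊤ μ := by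
    cases s
    · exact memLp_top (hNmeas x) (hNbdd x)
    · exact memLp_top (hPmeas x) (hPbdd x)
  have hW (a : V → Bool) : Integrable (modelWeight X a) μ :=
    (memLp_top_modelWeight hlit a).integrable le_top
  have hWW (a b : V → Bool) : Integrable (fun ω => modelWeight X a ω * modelWeight X b ω) μ :=
    ((memLp_top_modelWeight hlit b).mul (memLp_top_modelWeight hlit a)).integrable le_top
  change cov μ (fun ω => ∑ a ∈ Af, modelWeight X a ω) (fun ω => ∑ b ∈ Ag, modelWeight X b ω) = _
  rw [cov_sum_sum Af Ag _ _ (fun a _ => hW a) (fun b _ => hW b) (fun a _ b _ => hWW a b)]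
  simp only [cov_modelWeight hindep (fun x => (hPmeas x).prodMk (hNmeas x))
    (fun x => integral_litWeight (hPexp x) (hNexp x))
    (fun x => integral_litWeight_mul_litWeight (hPexp x) (hNexp x) (hPvar x) (hNvar x) (hPNcov x))]
  exact Finset.sum_sum_ite_eq_sub_one Af Ag _

theorem cov_wmc_eq {Ω V : Type*} [MeasurableSpace Ω] [Fintype V] [DecidableEq V]
    (μ : Measure Ω) [IsProbabilityMeasure μ] (P N : V → Ω → ℝ)
    (hPmeas : ∀ x, Measurable (P x)) (hNmeas : ∀ x, Measurable (N x))
    (hPbdd : ∀ x, ∃ C, ∀ ω, |P x ω| ≤ C) (hNbdd : ∀ x, ∃ C, ∀ ω, |N x ω| ≤ C)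
    (hPexp : ∀ x, (∫ ω, P x ω ∂μ) = 1) (hNexp : ∀ x, (∫ ω, N x ω ∂μ) = 1)
    (hPvar : ∀ x, cov μ (P x) (P x) = 3) (hNvar : ∀ x, cov μ (N x) (N x) = 3)
    (hPNcov : ∀ x, cov μ (P x) (N x) = -1)
    (hindep : iIndepFun (fun x ω => (P x ω, N x ω)) μ)
    (Af Ag : Finset (V → Bool)) :
    cov μ (fun ω => ∑ a ∈ Af, ∏ x, (if a x then P x ω else N x ω))
          (fun ω => ∑ b ∈ Ag, ∏ x, (if b x then P x ω else N x ω)) =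
      (4 ^ (Fintype.card V) - 1) * ((Af ∩ Ag).card : ℝ) -
        (((Af ×ˢ Ag).filter (fun p => p.1 ≠ p.2)).card : ℝ) :=
  cov_wmc_eq_general μ P N hPmeas hNmeas hPbdd hNbdd hPexp hNexp hPvar hNvar hPNcov hindep Af Ag
end

section
/- Let f, g be Boolean functions on variable set V, z ∉ V a fresh variable, and h := (z ∧ f) ∨ (¬z ∧ g) on V ∪ {z}. Suppose E[P_z] = E[N_z] = 1, Var(P_z) = Var(N_z) = 3, Cov(P_z, N_z) = −3, and (P_z, N_z) is independent of all weight variables for V. Then Cov(W_f^V, W_g^V) = Var(W_f^V) + Var(W_g^V) − Var(W_h^{V∪{z}})/4 + (3/4)·(E[W_f^V] − E[W_g^V])². -/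
open MeasureTheory ProbabilityTheory

/-- Weighted model count over variable set `U` with model set `A`. -/
noncomputable def wmc {Ω U : Type*} [Fintype U] (P N : U → Ω → ℝ)
    (A : Finset (U → Bool)) : Ω → ℝ :=
  fun ω => ∑ a ∈ A, ∏ x, if a x then P x ω else N x ω

/-! Splitting the models of `h` by the value of `z` gives `W_h = P_z W_f + N_z W_g`, where
`(P_z, N_z)` is independent of `(W_f, W_g)`. Hence `E W_h = E W_f + E W_g` and, since
`E P_z² = E N_z² = 4` and `E[P_z N_z] = -2`, `E W_h² = 4 E W_f² - 4 E[W_f W_g] + 4 E W_g²`;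
the identity is then algebra. -/

section WeightedModelCount

variable {Ω V : Type*} [Fintype V]

theorem wmc_filter_ite [DecidableEq V] (P N : Option V → Ω → ℝ) (Af Ag : Finset (V → Bool)) :
    wmc P N (Finset.univ.filter fun a : Option V → Bool =>
        if a none then (fun x => a (some x)) ∈ Af else (fun x => a (some x)) ∈ Ag) =
      fun ω => P none ω * wmc (fun x => P (some x)) (fun x => N (some x)) Af ω +
        N none ω * wmc (fun x => P (some x)) (fun x => N (some x)) Ag ω := by
  ext ω
  simp only [wmc, Finset.sum_filter, Finset.mul_sum]
  rw [← (Equiv.piOptionEquivProd (β := fun _ => Bool)).symm.sum_comp, Fintype.sum_prod_type,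
    Fintype.sum_bool]
  simp [Fintype.prod_option, Finset.sum_ite_mem]

variable [MeasurableSpace Ω] {P N : V → Ω → ℝ}

theorem measurable_wmc (hP : ∀ x, Measurable (P x)) (hN : ∀ x, Measurable (N x))
    (A : Finset (V → Bool)) : Measurable (wmc P N A) :=
  Finset.measurable_sum _ fun a _ => Finset.measurable_prod _ fun x _ => by
    by_cases h : a x <;> simp [h, hP, hN]

theorem memLp_top_wmc {μ : Measure Ω} (hP : ∀ x, MemLp (P x) ⊤ μ) (hN : ∀ x, MemLp (N x) ⊤ μ)
    (A : Finset (V → Bool)) : MemLp (wmc P N A) ⊤ μ := by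
  refine memLp_finsetSum (f := fun a ω => ∏ x, if a x then P x ω else N x ω) A fun a _ => ?_
  simpa using MemLp.prod' (μ := μ) (s := Finset.univ) (p := fun _ => ⊤)
    (f := fun x ω => if a x then P x ω else N x ω) fun x _ => by
      by_cases h : a x <;> simp [h, hP, hN]

end WeightedModelCount

namespace ProbabilityTheory

theorem iIndepFun.indepFun_none_some {Ω ι β : Type*} [MeasurableSpace Ω] [MeasurableSpace β]
    {μ : Measure Ω} [Fintype ι] {X : Option ι → Ω → β} (h : iIndepFun X μ)
    (hX : ∀ i, Measurable (X i)) : IndepFun (X none) (fun ω i => X (some i) ω) μ := by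
  let S : Finset (Option ι) := {none}
  let T : Finset (Option ι) := Finset.univ.map Function.Embedding.some
  have hST : Disjoint S T := by simp [S, T]
  exact (h.indepFun_finset S T hST hX).comp (φ := fun w : S → β => w ⟨none, by simp [S]⟩)
    (ψ := fun (w : T → β) i => w ⟨some i, by simp [T]⟩) (by fun_prop) (by fun_prop)

section Moments

variable {Ω : Type*} [MeasurableSpace Ω] {μ : Measure Ω} [IsProbabilityMeasure μ]
  {p n u v : Ω → ℝ}

theorem IndepFun.integral_mul_add_mul
    (hpn : IndepFun (fun ω => (p ω, n ω)) (fun ω => (u ω, v ω)) μ)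
    (hp : MemLp p ⊤ μ) (hn : MemLp n ⊤ μ) (hu : MemLp u ⊤ μ) (hv : MemLp v ⊤ μ) :
    ∫ ω, p ω * u ω + n ω * v ω ∂μ =
      (∫ ω, p ω ∂μ) * (∫ ω, u ω ∂μ) + (∫ ω, n ω ∂μ) * (∫ ω, v ω ∂μ) := by
  have hX : AEMeasurable (fun ω => (p ω, n ω)) μ := hp.1.aemeasurable.prodMk hn.1.aemeasurable
  have hY : AEMeasurable (fun ω => (u ω, v ω)) μ := hu.1.aemeasurable.prodMk hv.1.aemeasurable
  rw [integral_add ((hu.mul' hp).integrable le_top) ((hv.mul' hn).integrable le_top),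
    hpn.integral_fun_comp_mul_comp (f := Prod.fst) (g := Prod.fst) hX hY
      continuous_fst.aestronglyMeasurable continuous_fst.aestronglyMeasurable,
    hpn.integral_fun_comp_mul_comp (f := Prod.snd) (g := Prod.snd) hX hY
      continuous_snd.aestronglyMeasurable continuous_snd.aestronglyMeasurable]

theorem IndepFun.integral_mul_add_mul_mul_self
    (hpn : IndepFun (fun ω => (p ω, n ω)) (fun ω => (u ω, v ω)) μ)
    (hp : MemLp p ⊤ μ) (hn : MemLp n ⊤ μ) (hu : MemLp u ⊤ μ) (hv : MemLp v ⊤ μ) :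
    ∫ ω, (p ω * u ω + n ω * v ω) * (p ω * u ω + n ω * v ω) ∂μ =
      (∫ ω, p ω * p ω ∂μ) * (∫ ω, u ω * u ω ∂μ) +
        2 * ((∫ ω, p ω * n ω ∂μ) * (∫ ω, u ω * v ω ∂μ)) +
        (∫ ω, n ω * n ω ∂μ) * (∫ ω, v ω * v ω ∂μ) := by
  have factor {f g : ℝ × ℝ → ℝ} (hf : Continuous f) (hg : Continuous g) :=
    hpn.integral_fun_comp_mul_comp (hp.1.aemeasurable.prodMk hn.1.aemeasurable)
      (hu.1.aemeasurable.prodMk hv.1.aemeasurable) hf.aestronglyMeasurable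
      hg.aestronglyMeasurable
  have integrable_mul_mul {a b c d : Ω → ℝ} (ha : MemLp a ⊤ μ) (hb : MemLp b ⊤ μ)
      (hc : MemLp c ⊤ μ) (hd : MemLp d ⊤ μ) : Integrable (fun ω => a ω * b ω * (c ω * d ω)) μ :=
    ((hd.mul' hc (r := ⊤)).mul' (hb.mul' ha (r := ⊤)) (r := ⊤)).integrable le_top
  calc ∫ ω, (p ω * u ω + n ω * v ω) * (p ω * u ω + n ω * v ω) ∂μ
      = ∫ ω, p ω * p ω * (u ω * u ω) + 2 * (p ω * n ω * (u ω * v ω)) +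
          n ω * n ω * (v ω * v ω) ∂μ := by congr with ω; ring
    _ = _ := by
      rw [integral_add
          (f := fun ω => p ω * p ω * (u ω * u ω) + 2 * (p ω * n ω * (u ω * v ω)))
          ((integrable_mul_mul hp hp hu hu).add ((integrable_mul_mul hp hn hu hv).const_mul 2))
          (integrable_mul_mul hn hn hv hv), integral_add (integrable_mul_mul hp hp hu hu)
          ((integrable_mul_mul hp hn hu hv).const_mul 2), integral_const_mul,
        factor (f := fun q => q.1 * q.1) (g := fun q => q.1 * q.1) (by fun_prop) (by fun_prop),
        factor (f := fun q => q.1 * q.2) (g := fun q => q.1 * q.2) (by fun_prop) (by fun_prop),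
        factor (f := fun q => q.2 * q.2) (g := fun q => q.2 * q.2) (by fun_prop) (by fun_prop)]

end Moments

end ProbabilityTheory

/-- The fresh variable `z` is `none : Option V`; the other variables are `some x`.
`h = (z ∧ f) ∨ (¬ z ∧ g)`, whose models on `V ∪ {z}` set `z` true and restrict to a model
of `f`, or set `z` false and restrict to a model of `g`. -/
theorem cov_from_variances_via_ite {Ω V : Type*} [MeasurableSpace Ω] [Fintype V] [DecidableEq V]
    (μ : Measure Ω) [IsProbabilityMeasure μ] (P N : Option V → Ω → ℝ)
    (hPmeas : ∀ x, Measurable (P x)) (hNmeas : ∀ x, Measurable (N x))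
    (hPbdd : ∀ x, ∃ C, ∀ ω, |P x ω| ≤ C) (hNbdd : ∀ x, ∃ C, ∀ ω, |N x ω| ≤ C)
    (hPzexp : (∫ ω, P none ω ∂μ) = 1) (hNzexp : (∫ ω, N none ω ∂μ) = 1)
    (hPzvar : cov μ (P none) (P none) = 3) (hNzvar : cov μ (N none) (N none) = 3)
    (hPNzcov : cov μ (P none) (N none) = -3)
    (hindep : iIndepFun (fun x ω => (P x ω, N x ω)) μ)
    (Af Ag : Finset (V → Bool))
    (Ah : Finset (Option V → Bool))
    (hAh : Ah = Finset.univ.filter (fun a : Option V → Bool =>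
      if a none then (fun x => a (some x)) ∈ Af else (fun x => a (some x)) ∈ Ag)) :
    cov μ (wmc (fun x => P (some x)) (fun x => N (some x)) Af)
          (wmc (fun x => P (some x)) (fun x => N (some x)) Ag) =
      cov μ (wmc (fun x => P (some x)) (fun x => N (some x)) Af)
            (wmc (fun x => P (some x)) (fun x => N (some x)) Af) +
        cov μ (wmc (fun x => P (some x)) (fun x => N (some x)) Ag)
              (wmc (fun x => P (some x)) (fun x => N (some x)) Ag) -
        cov μ (wmc P N Ah) (wmc P N Ah) / 4 +
        3 * ((∫ ω, wmc (fun x => P (some x)) (fun x => N (some x)) Af ω ∂μ) -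
             (∫ ω, wmc (fun x => P (some x)) (fun x => N (some x)) Ag ω ∂μ)) ^ 2 / 4 := by
  set Wf := wmc (fun x => P (some x)) (fun x => N (some x)) Af
  set Wg := wmc (fun x => P (some x)) (fun x => N (some x)) Ag
  have hWh : wmc P N Ah = fun ω => P none ω * Wf ω + N none ω * Wg ω :=
    hAh ▸ wmc_filter_ite P N Af Ag
  have memLp_of_bdd {f : Ω → ℝ} (hf : Measurable f) (hb : ∃ C, ∀ ω, |f ω| ≤ C) :
      MemLp f ⊤ μ :=
    hb.elim fun C hC => memLp_top_of_bound hf.aestronglyMeasurable C (ae_of_all _ hC)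
  have hP x := memLp_of_bdd (hPmeas x) (hPbdd x)
  have hN x := memLp_of_bdd (hNmeas x) (hNbdd x)
  have hWf : MemLp Wf ⊤ μ := memLp_top_wmc (fun x => hP _) (fun x => hN _) Af
  have hWg : MemLp Wg ⊤ μ := memLp_top_wmc (fun x => hP _) (fun x => hN _) Ag
  have hind : IndepFun (fun ω => (P none ω, N none ω)) (fun ω => (Wf ω, Wg ω)) μ := by
    -- `Wf` is definitionally `wmc` on the weight space `V → ℝ × ℝ`, read at the weights of `V`
    have hwmc (A : Finset (V → Bool)) :=
      measurable_wmc (P := fun x (w : V → ℝ × ℝ) => (w x).1) (N := fun x w => (w x).2)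
        (by fun_prop) (by fun_prop) A
    exact (hindep.indepFun_none_some fun x => (hPmeas x).prodMk (hNmeas x)).comp measurable_id
      ((hwmc Af).prodMk (hwmc Ag))
  have hPP : ∫ ω, P none ω * P none ω ∂μ = 4 := by
    rw [cov, hPzexp] at hPzvar; linarith
  have hNN : ∫ ω, N none ω * N none ω ∂μ = 4 := by
    rw [cov, hNzexp] at hNzvar; linarith
  have hPN : ∫ ω, P none ω * N none ω ∂μ = -2 := by
    rw [cov, hPzexp, hNzexp] at hPNzcov; linarith
  simp only [cov, hWh]
  rw [hind.integral_mul_add_mul (hP none) (hN none) hWf hWg,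
    hind.integral_mul_add_mul_mul_self (hP none) (hN none) hWf hWg, hPP, hNN, hPN, hPzexp, hNzexp]
  ring
end
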